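/- For any positive integers n and k and any integer i with 1 ≤ i ≤ n−k, the coefficient a_{n,k}^{(i)} of z^i in JS_n^k(z) equals the number of ordered pairs (Q₁, Q₂) of simply hooked k-quasi-permutations of [n] satisfying Q₁⁻ = Q₂⁻, |Q₁⁻| = |Q₂⁻| = i, and pr_y(Q₁) = pr_y(Q₂). -/

import Mathlib

open Polynomial

/-- The Jacobi-Stirling numbers of the second kind `JS n k` as polynomials in `z`. -/
noncomputable def JS : ℕ → ℕ → Polynomial ℤ
  | 0, 0 => 1
  | 0, _ + 1 => 0
  | _ + 1, 0 => 0
  | n + 1, k + 1 => JS n k + C ((k : ℤ) + 1) * (C ((k : ℤ) + 1) + X) * JS n (k + 1)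

/-- The supdiagonal part `Q⁺` of `Q ⊆ [n] × [n]`. -/
def Qsup {n : ℕ} (Q : Finset (Fin n × Fin n)) : Finset (Fin n × Fin n) :=
  Q.filter fun p => p.1 ≤ p.2

/-- The subdiagonal part `Q⁻` of `Q ⊆ [n] × [n]`. -/
def Qsub {n : ℕ} (Q : Finset (Fin n × Fin n)) : Finset (Fin n × Fin n) :=
  Q.filter fun p => p.2 ≤ p.1

/-- The projection `pr_x` on the first coordinates. -/
def prX {n : ℕ} (Q : Finset (Fin n × Fin n)) : Finset (Fin n) := Q.image Prod.fst

/-- The projection `pr_y` on the second coordinates. -/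
def prY {n : ℕ} (Q : Finset (Fin n × Fin n)) : Finset (Fin n) := Q.image Prod.snd

/-- `Q` is a simply hooked `k`-quasi-permutation of `[n]`: it is contained in the diagram of
some permutation of `[n]`, has `n - k` elements, and `pr_x(Q⁻) ∩ pr_y(Q⁺) = ∅`. -/
def IsSHQP (n k : ℕ) (Q : Finset (Fin n × Fin n)) : Prop :=
  (∃ σ : Equiv.Perm (Fin n), ∀ p ∈ Q, σ p.1 = p.2) ∧
  Q.card = n - k ∧
  prX (Qsub Q) ∩ prY (Qsup Q) = ∅

/-!
Both sides obey the recurrence `JS (n+1) (k+1) = JS n k + (k+1) (k+1+z) JS n (k+1)`, read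
coefficientwise. Sort the pairs `(Q₁, Q₂)` of simply hooked `(k+1)`-quasi-permutations of
`{0, …, n}` by the role of the top element `n` in `Q₁`; the hook condition forbids it to be both
a row and a column.
* `n` is a row: its point `(n, y)` is subdiagonal, so it lies in `Q₁⁻ = Q₂⁻`. Deleting it from
  both leaves a pair for `(n, k+1)` with one subdiagonal point fewer, and `y` ranges over the
  `k+1` free columns: this is the `z` term.
* `n` is only a column: by `pr_y Q₁ = pr_y Q₂` both `Q₁` and `Q₂` have a point in column `n`,
  necessarily supdiagonal. Deleting them leaves a pair for `(n, k+1)`, and the two rows range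
  independently over `k+1` free rows each.
* `n` does not occur (in `Q₁`, hence in `Q₂`): the pair is a pair for `(n, k)`.
-/

open Finset

theorem exists_perm_iff_injOn {α : Type*} [Fintype α] (Q : Finset (α × α)) :
    (∃ σ : Equiv.Perm α, ∀ p ∈ Q, σ p.1 = p.2) ↔
      Set.InjOn Prod.fst (Q : Set (α × α)) ∧ Set.InjOn Prod.snd (Q : Set (α × α)) := by
  constructor
  · rintro ⟨σ, hσ⟩
    refine ⟨fun p hp q hq h => Prod.ext h ?_, fun p hp q hq h => Prod.ext ?_ h⟩
    · rw [← hσ p hp, ← hσ q hq, h]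
    · exact σ.injective (by rw [hσ p hp, hσ q hq, h])
  · rintro ⟨h₁, h₂⟩
    classical
    let e := (Equiv.Set.imageOfInjOn _ _ h₁).symm.trans (Equiv.Set.imageOfInjOn _ _ h₂)
    refine ⟨e.extendSubtype, fun p hp => ?_⟩
    rw [Equiv.extendSubtype_apply_of_mem e p.1 ⟨p, hp, rfl⟩]
    have : (Equiv.Set.imageOfInjOn _ _ h₁).symm ⟨p.1, p, hp, rfl⟩ = ⟨p, hp⟩ :=
      (Equiv.symm_apply_eq _).2 rfl
    simp only [e, Equiv.trans_apply, this]
    rfl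

theorem Finset.image_erase_of_injOn {α β : Type*} [DecidableEq α] [DecidableEq β] {f : α → β}
    {s : Finset α} (hf : Set.InjOn f s) {a : α} (ha : a ∈ s) :
    (s.erase a).image f = (s.image f).erase (f a) := by
  ext b
  simp only [mem_image, mem_erase]
  constructor
  · rintro ⟨x, ⟨hxa, hx⟩, rfl⟩
    exact ⟨fun hfx => hxa (hf hx ha hfx), x, hx, rfl⟩
  · rintro ⟨hb, x, hx, rfl⟩
    exact ⟨x, ⟨fun hxa => hb (hxa ▸ rfl), hx⟩, rfl⟩

theorem Finset.eq_and_eq_of_insert_eq_insert {α : Type*} [DecidableEq α] {s t u : Finset α}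
    {a b : α} (hs : s ⊆ u) (ht : t ⊆ u) (ha : a ∉ u) (hb : b ∉ u)
    (h : insert a s = insert b t) : a = b ∧ s = t := by
  have hab : a = b := by
    rcases mem_insert.1 (h ▸ mem_insert_self a s) with hab | hat
    · exact hab
    · exact absurd (ht hat) ha
  subst hab
  exact ⟨rfl, by rw [← erase_insert (fun h => ha (hs h)), h, erase_insert (fun h => hb (ht h))]⟩

def IsHooked {α : Type*} [LE α] (Q : Finset (α × α)) : Prop :=
  ∀ p ∈ Q, ∀ q ∈ Q, p.1 ≤ p.2 → q.2 ≤ q.1 → p.2 ≠ q.1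

theorem isHooked_iff {n : ℕ} (Q : Finset (Fin n × Fin n)) :
    prX (Qsub Q) ∩ prY (Qsup Q) = ∅ ↔ IsHooked Q := by
  rw [← disjoint_iff_inter_eq_empty, disjoint_left]
  simp only [prX, prY, Qsub, Qsup, mem_image, mem_filter, IsHooked]
  constructor
  · rintro h p hp q hq hpu hql hpq
    exact h ⟨q, ⟨hq, hql⟩, rfl⟩ ⟨p, ⟨hp, hpu⟩, hpq⟩
  · rintro h _ ⟨q, ⟨hq, hql⟩, rfl⟩ ⟨p, ⟨hp, hpu⟩, hpq⟩
    exact h p hp q hq hpu hql hpq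

theorem IsHooked.mono {α : Type*} [LE α] {Q Q' : Finset (α × α)} (h : IsHooked Q)
    (hQ' : Q' ⊆ Q) : IsHooked Q' :=
  fun p hp q hq => h p (hQ' hp) q (hQ' hq)

theorem IsHooked.notMem_diag {α : Type*} [Preorder α] {Q : Finset (α × α)} (h : IsHooked Q)
    (a : α) : (a, a) ∉ Q :=
  fun ha => h _ ha _ ha le_rfl le_rfl rfl

theorem IsHooked.insert_of_max {n : ℕ} {Q : Finset (ℕ × ℕ)} {p : ℕ × ℕ} (h : IsHooked Q)
    (hQ : Q ⊆ range n ×ˢ range n) (hp : p.1 = n ∧ p.2 < n ∨ p.1 < n ∧ p.2 = n) :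
    IsHooked (insert p Q) := by
  have hQn : ∀ q ∈ Q, q.1 < n ∧ q.2 < n := fun q hq => by simpa using hQ hq
  intro a ha b hb hau hbl
  rcases mem_insert.1 ha with rfl | haQ <;> rcases mem_insert.1 hb with rfl | hbQ
  · omega
  · have := hQn b hbQ; omega
  · have := hQn a haQ; omega
  · exact h a haQ b hbQ hau hbl

def lowerPart (Q : Finset (ℕ × ℕ)) : Finset (ℕ × ℕ) := Q.filter fun p => p.2 ≤ p.1

theorem mem_lowerPart {Q : Finset (ℕ × ℕ)} {p : ℕ × ℕ} : p ∈ lowerPart Q ↔ p ∈ Q ∧ p.2 ≤ p.1 :=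
  mem_filter

theorem lowerPart_insert_of_le {Q : Finset (ℕ × ℕ)} {p : ℕ × ℕ} (hp : p.2 ≤ p.1) :
    lowerPart (insert p Q) = insert p (lowerPart Q) := by
  rw [lowerPart, filter_insert, if_pos hp]; rfl

theorem lowerPart_insert_of_lt {Q : Finset (ℕ × ℕ)} {p : ℕ × ℕ} (hp : p.1 < p.2) :
    lowerPart (insert p Q) = lowerPart Q := by
  rw [lowerPart, filter_insert, if_neg (not_le.2 hp)]; rfl

theorem lowerPart_erase (Q : Finset (ℕ × ℕ)) (p : ℕ × ℕ) :
    lowerPart (Q.erase p) = (lowerPart Q).erase p :=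
  filter_erase _ _ _

theorem subset_range_of_notMem_image {n : ℕ} {Q : Finset (ℕ × ℕ)}
    (hQ : Q ⊆ range (n + 1) ×ˢ range (n + 1)) (hfst : n ∉ Q.image Prod.fst)
    (hsnd : n ∉ Q.image Prod.snd) : Q ⊆ range n ×ˢ range n := by
  intro p hp
  have h1 : p.1 ≠ n := fun h => hfst (mem_image.2 ⟨p, hp, h⟩)
  have h2 : p.2 ≠ n := fun h => hsnd (mem_image.2 ⟨p, hp, h⟩)
  have := hQ hp
  simp only [mem_product, mem_range] at this ⊢
  omega

/-- `[n]` is realised as `range n ⊆ ℕ`, so that `[n] ⊆ [n + 1]` literally; lying in the diagram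
of a permutation becomes injectivity of both projections (`exists_perm_iff_injOn`). -/
structure IsSHQPNat (n k : ℕ) (Q : Finset (ℕ × ℕ)) : Prop where
  subset_range : Q ⊆ range n ×ˢ range n
  injOn_fst : Set.InjOn Prod.fst (Q : Set (ℕ × ℕ))
  injOn_snd : Set.InjOn Prod.snd (Q : Set (ℕ × ℕ))
  card_eq : #Q = n - k
  isHooked : IsHooked Q

namespace IsSHQPNat

variable {n k : ℕ} {Q : Finset (ℕ × ℕ)}

theorem lt_of_mem (h : IsSHQPNat n k Q) {p : ℕ × ℕ} (hp : p ∈ Q) : p.1 < n ∧ p.2 < n := by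
  simpa using h.subset_range hp

theorem notMem_image_fst (h : IsSHQPNat n k Q) : n ∉ Q.image Prod.fst := by
  simp only [mem_image, not_exists, not_and]
  exact fun p hp => (h.lt_of_mem hp).1.ne

theorem notMem_image_snd (h : IsSHQPNat n k Q) : n ∉ Q.image Prod.snd := by
  simp only [mem_image, not_exists, not_and]
  exact fun p hp => (h.lt_of_mem hp).2.ne

theorem lt_of_mem_top_fst (h : IsSHQPNat (n + 1) k Q) {y : ℕ} (hy : (n, y) ∈ Q) : y < n := by
  have := (h.lt_of_mem hy).2
  have : y ≠ n := by rintro rfl; exact h.isHooked.notMem_diag _ hy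
  omega

theorem lt_of_mem_top_snd (h : IsSHQPNat (n + 1) k Q) {x : ℕ} (hx : (x, n) ∈ Q) : x < n := by
  have := (h.lt_of_mem hx).1
  have : x ≠ n := by rintro rfl; exact h.isHooked.notMem_diag _ hx
  omega

theorem notMem_image_snd_of_mem_top (h : IsSHQPNat (n + 1) k Q) {y : ℕ} (hy : (n, y) ∈ Q) :
    n ∉ Q.image Prod.snd := by
  intro hn
  obtain ⟨⟨x, _⟩, hx, rfl⟩ := mem_image.1 hn
  exact h.isHooked _ hx _ hy (Nat.lt_succ_iff.1 (h.lt_of_mem hx).1)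
    (Nat.lt_succ_iff.1 (h.lt_of_mem hy).2) rfl

theorem mem_lowerPart_of_mem_top (h : IsSHQPNat (n + 1) k Q) {y : ℕ} (hy : (n, y) ∈ Q) :
    (n, y) ∈ lowerPart Q :=
  mem_lowerPart.2 ⟨hy, Nat.lt_succ_iff.1 (h.lt_of_mem hy).2⟩

theorem erase (h : IsSHQPNat n k Q) {p : ℕ × ℕ} (hp : p ∈ Q) :
    IsSHQPNat n (k + 1) (Q.erase p) where
  subset_range := (erase_subset p Q).trans h.subset_range
  injOn_fst := h.injOn_fst.mono (coe_subset.2 (erase_subset p Q))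
  injOn_snd := h.injOn_snd.mono (coe_subset.2 (erase_subset p Q))
  card_eq := by rw [card_erase_of_mem hp, h.card_eq]; omega
  isHooked := h.isHooked.mono (erase_subset p Q)

theorem insert_of_notMem (h : IsSHQPNat n (k + 1) Q) (hk : k < n) {p : ℕ × ℕ}
    (hp : p ∈ range n ×ˢ range n) (hfst : p.1 ∉ Q.image Prod.fst)
    (hsnd : p.2 ∉ Q.image Prod.snd) (hhook : IsHooked (insert p Q)) :
    IsSHQPNat n k (insert p Q) := by
  have hpQ : p ∉ Q := fun hpQ => hfst (mem_image_of_mem _ hpQ)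
  refine ⟨insert_subset hp h.subset_range, ?_, ?_, ?_, hhook⟩
  · rw [coe_insert, Set.injOn_insert (by simpa using hpQ)]
    exact ⟨h.injOn_fst, by simpa using hfst⟩
  · rw [coe_insert, Set.injOn_insert (by simpa using hpQ)]
    exact ⟨h.injOn_snd, by simpa using hsnd⟩
  · rw [card_insert_of_notMem hpQ, h.card_eq]; omega

theorem succ_succ_iff (hQ : Q ⊆ range n ×ˢ range n) :
    IsSHQPNat (n + 1) (k + 1) Q ↔ IsSHQPNat n k Q := by
  have hrange : range n ×ˢ range n ⊆ range (n + 1) ×ˢ range (n + 1) :=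
    product_subset_product (range_subset_range.2 n.le_succ) (range_subset_range.2 n.le_succ)
  constructor
  · intro h
    exact ⟨hQ, h.injOn_fst, h.injOn_snd, by rw [h.card_eq]; omega, h.isHooked⟩
  · intro h
    exact ⟨hQ.trans hrange, h.injOn_fst, h.injOn_snd, by rw [h.card_eq]; omega, h.isHooked⟩

theorem erase_top (h : IsSHQPNat (n + 1) (k + 1) Q) {p : ℕ × ℕ} (hp : p ∈ Q)
    (hsub : Q.erase p ⊆ range n ×ˢ range n) : IsSHQPNat n (k + 1) (Q.erase p) :=
  (succ_succ_iff hsub).1 (h.erase hp)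

theorem insert_top (h : IsSHQPNat n (k + 1) Q) (hk : k < n) {p : ℕ × ℕ}
    (hp : p.1 = n ∧ p.2 < n ∨ p.1 < n ∧ p.2 = n) (hfst : p.1 ∉ Q.image Prod.fst)
    (hsnd : p.2 ∉ Q.image Prod.snd) : IsSHQPNat (n + 1) (k + 1) (insert p Q) :=
  ((succ_succ_iff h.subset_range).2 h).insert_of_notMem (by omega)
    (by simp only [mem_product, mem_range]; omega) hfst hsnd
    (h.isHooked.insert_of_max h.subset_range hp)

theorem erase_subset_range_of_fst (h : IsSHQPNat (n + 1) k Q) {p : ℕ × ℕ} (hp : p ∈ Q)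
    (hp₁ : p.1 = n) (hsnd : n ∉ Q.image Prod.snd) : Q.erase p ⊆ range n ×ˢ range n := by
  refine subset_range_of_notMem_image ((erase_subset p Q).trans h.subset_range) ?_
    fun hn => hsnd (image_subset_image (erase_subset p Q) hn)
  rw [image_erase_of_injOn h.injOn_fst hp, hp₁]
  exact notMem_erase n _

theorem erase_subset_range_of_snd (h : IsSHQPNat (n + 1) k Q) {p : ℕ × ℕ} (hp : p ∈ Q)
    (hp₂ : p.2 = n) (hfst : n ∉ Q.image Prod.fst) : Q.erase p ⊆ range n ×ˢ range n := by
  refine subset_range_of_notMem_image ((erase_subset p Q).trans h.subset_range)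
    (fun hn => hfst (image_subset_image (erase_subset p Q) hn)) ?_
  rw [image_erase_of_injOn h.injOn_snd hp, hp₂]
  exact notMem_erase n _

theorem card_range_sdiff_image_fst (h : IsSHQPNat n k Q) (hk : k ≤ n) :
    #(range n \ Q.image Prod.fst) = k := by
  have hsub : Q.image Prod.fst ⊆ range n := fun a ha => by
    obtain ⟨p, hp, rfl⟩ := mem_image.1 ha
    exact mem_range.2 (h.lt_of_mem hp).1
  rw [card_sdiff_of_subset hsub, card_range, card_image_of_injOn h.injOn_fst, h.card_eq]
  omega

theorem card_range_sdiff_image_snd (h : IsSHQPNat n k Q) (hk : k ≤ n) :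
    #(range n \ Q.image Prod.snd) = k := by
  have hsub : Q.image Prod.snd ⊆ range n := fun a ha => by
    obtain ⟨p, hp, rfl⟩ := mem_image.1 ha
    exact mem_range.2 (h.lt_of_mem hp).2
  rw [card_sdiff_of_subset hsub, card_range, card_image_of_injOn h.injOn_snd, h.card_eq]
  omega

end IsSHQPNat

structure IsSHQPPair (n k i : ℕ) (Q₁ Q₂ : Finset (ℕ × ℕ)) : Prop where
  left : IsSHQPNat n k Q₁
  right : IsSHQPNat n k Q₂
  lowerPart_eq : lowerPart Q₁ = lowerPart Q₂
  card_lowerPart : #(lowerPart Q₁) = i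
  image_snd_eq : Q₁.image Prod.snd = Q₂.image Prod.snd

namespace IsSHQPPair

variable {n k i : ℕ} {Q₁ Q₂ : Finset (ℕ × ℕ)}

theorem symm (h : IsSHQPPair n k i Q₁ Q₂) : IsSHQPPair n k i Q₂ Q₁ :=
  ⟨h.right, h.left, h.lowerPart_eq.symm, h.lowerPart_eq ▸ h.card_lowerPart, h.image_snd_eq.symm⟩

theorem mem_of_mem_top (h : IsSHQPPair (n + 1) k i Q₁ Q₂) {y : ℕ} (hy : (n, y) ∈ Q₁) :
    (n, y) ∈ Q₂ := by
  have hlow := h.left.mem_lowerPart_of_mem_top hy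
  rw [h.lowerPart_eq] at hlow
  exact (mem_lowerPart.1 hlow).1

theorem notMem_image_fst_top (h : IsSHQPPair (n + 1) k i Q₁ Q₂)
    (hn : n ∉ Q₁.image Prod.fst) : n ∉ Q₂.image Prod.fst := by
  intro hn₂
  obtain ⟨⟨_, y⟩, hy, rfl⟩ := mem_image.1 hn₂
  exact hn (mem_image_of_mem _ (h.symm.mem_of_mem_top hy))

theorem succ_succ_iff (h₁ : Q₁ ⊆ range n ×ˢ range n) (h₂ : Q₂ ⊆ range n ×ˢ range n) :
    IsSHQPPair (n + 1) (k + 1) i Q₁ Q₂ ↔ IsSHQPPair n k i Q₁ Q₂ := by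
  constructor
  · exact fun ⟨hl, hr, hlow, hcard, hsnd⟩ =>
      ⟨(IsSHQPNat.succ_succ_iff h₁).1 hl, (IsSHQPNat.succ_succ_iff h₂).1 hr, hlow, hcard, hsnd⟩
  · exact fun ⟨hl, hr, hlow, hcard, hsnd⟩ =>
      ⟨(IsSHQPNat.succ_succ_iff h₁).2 hl, (IsSHQPNat.succ_succ_iff h₂).2 hr, hlow, hcard, hsnd⟩

theorem insert_top_lower (h : IsSHQPPair n (k + 1) i Q₁ Q₂) (hk : k < n) {y : ℕ}
    (hy : y ∈ range n \ Q₁.image Prod.snd) :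
    IsSHQPPair (n + 1) (k + 1) (i + 1) (insert (n, y) Q₁) (insert (n, y) Q₂) := by
  obtain ⟨hyn, hy₁⟩ := mem_sdiff.1 hy
  have hyn : y < n := mem_range.1 hyn
  have hlow : (n, y) ∉ lowerPart Q₁ := fun hmem =>
    h.left.notMem_image_fst (mem_image_of_mem Prod.fst (mem_lowerPart.1 hmem).1)
  refine ⟨h.left.insert_top hk (.inl ⟨rfl, hyn⟩) h.left.notMem_image_fst hy₁,
    h.right.insert_top hk (.inl ⟨rfl, hyn⟩) h.right.notMem_image_fst (h.image_snd_eq ▸ hy₁),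
    ?_, ?_, ?_⟩
  · rw [lowerPart_insert_of_le hyn.le, lowerPart_insert_of_le hyn.le, h.lowerPart_eq]
  · rw [lowerPart_insert_of_le hyn.le, card_insert_of_notMem hlow, h.card_lowerPart]
  · rw [image_insert, image_insert, h.image_snd_eq]

theorem insert_top_upper (h : IsSHQPPair n (k + 1) i Q₁ Q₂) (hk : k < n) {x₁ x₂ : ℕ}
    (hx₁ : x₁ ∈ range n \ Q₁.image Prod.fst) (hx₂ : x₂ ∈ range n \ Q₂.image Prod.fst) :
    IsSHQPPair (n + 1) (k + 1) i (insert (x₁, n) Q₁) (insert (x₂, n) Q₂) := by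
  obtain ⟨hx₁n, hx₁⟩ := mem_sdiff.1 hx₁
  obtain ⟨hx₂n, hx₂⟩ := mem_sdiff.1 hx₂
  have hx₁n : x₁ < n := mem_range.1 hx₁n
  have hx₂n : x₂ < n := mem_range.1 hx₂n
  refine ⟨h.left.insert_top hk (.inr ⟨hx₁n, rfl⟩) hx₁ h.left.notMem_image_snd,
    h.right.insert_top hk (.inr ⟨hx₂n, rfl⟩) hx₂ h.right.notMem_image_snd, ?_, ?_, ?_⟩
  · rw [lowerPart_insert_of_lt hx₁n, lowerPart_insert_of_lt hx₂n, h.lowerPart_eq]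
  · rw [lowerPart_insert_of_lt hx₁n, h.card_lowerPart]
  · rw [image_insert, image_insert, h.image_snd_eq]

theorem erase_top_lower (h : IsSHQPPair (n + 1) (k + 1) (i + 1) Q₁ Q₂) {y : ℕ}
    (hy : (n, y) ∈ Q₁) :
    IsSHQPPair n (k + 1) i (Q₁.erase (n, y)) (Q₂.erase (n, y)) := by
  have hy₂ := h.mem_of_mem_top hy
  refine ⟨h.left.erase_top hy (h.left.erase_subset_range_of_fst hy rfl
      (h.left.notMem_image_snd_of_mem_top hy)),
    h.right.erase_top hy₂ (h.right.erase_subset_range_of_fst hy₂ rfl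
      (h.right.notMem_image_snd_of_mem_top hy₂)), ?_, ?_, ?_⟩
  · rw [lowerPart_erase, lowerPart_erase, h.lowerPart_eq]
  · rw [lowerPart_erase, card_erase_of_mem (h.left.mem_lowerPart_of_mem_top hy),
      h.card_lowerPart, Nat.add_sub_cancel]
  · rw [image_erase_of_injOn h.left.injOn_snd hy, image_erase_of_injOn h.right.injOn_snd hy₂,
      h.image_snd_eq]

theorem erase_top_upper (h : IsSHQPPair (n + 1) (k + 1) i Q₁ Q₂)
    (hn : n ∉ Q₁.image Prod.fst) {x₁ x₂ : ℕ} (hx₁ : (x₁, n) ∈ Q₁) (hx₂ : (x₂, n) ∈ Q₂) :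
    IsSHQPPair n (k + 1) i (Q₁.erase (x₁, n)) (Q₂.erase (x₂, n)) := by
  have hlow : ∀ {Q : Finset (ℕ × ℕ)} {x : ℕ}, x < n → (x, n) ∉ lowerPart Q := fun hx hmem =>
    hx.not_ge (mem_lowerPart.1 hmem).2
  refine ⟨h.left.erase_top hx₁ (h.left.erase_subset_range_of_snd hx₁ rfl hn),
    h.right.erase_top hx₂
      (h.right.erase_subset_range_of_snd hx₂ rfl (h.notMem_image_fst_top hn)), ?_, ?_, ?_⟩
  · rw [lowerPart_erase, lowerPart_erase, erase_eq_of_notMem (hlow (h.left.lt_of_mem_top_snd hx₁)),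
      erase_eq_of_notMem (hlow (h.right.lt_of_mem_top_snd hx₂)), h.lowerPart_eq]
  · rw [lowerPart_erase, erase_eq_of_notMem (hlow (h.left.lt_of_mem_top_snd hx₁)),
      h.card_lowerPart]
  · rw [image_erase_of_injOn h.left.injOn_snd hx₁, image_erase_of_injOn h.right.injOn_snd hx₂,
      h.image_snd_eq]

end IsSHQPPair

open Classical in
noncomputable def shqpPairs (n k i : ℕ) : Finset (Finset (ℕ × ℕ) × Finset (ℕ × ℕ)) :=
  ((range n ×ˢ range n).powerset ×ˢ (range n ×ˢ range n).powerset).filter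
    fun QQ => IsSHQPPair n k i QQ.1 QQ.2

section shqpPairs

variable {n k i : ℕ}

theorem mem_shqpPairs {QQ : Finset (ℕ × ℕ) × Finset (ℕ × ℕ)} :
    QQ ∈ shqpPairs n k i ↔ IsSHQPPair n k i QQ.1 QQ.2 := by
  classical
  rw [shqpPairs, mem_filter, mem_product, mem_powerset, mem_powerset]
  exact ⟨And.right, fun h => ⟨⟨h.left.subset_range, h.right.subset_range⟩, h⟩⟩

theorem card_shqpPairs_self : #(shqpPairs n n i) = if i = 0 then 1 else 0 := by
  have hempty : ∀ {Q}, IsSHQPNat n n Q → Q = ∅ := fun h =>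
    card_eq_zero.1 (h.card_eq.trans (Nat.sub_self n))
  have hpair : IsSHQPNat n n ∅ := ⟨empty_subset _, by simp, by simp, by simp,
    fun _ h => absurd h (notMem_empty _)⟩
  split_ifs with hi
  · refine card_eq_one.2 ⟨(∅, ∅), eq_singleton_iff_unique_mem.2 ⟨mem_shqpPairs.2
      ⟨hpair, hpair, rfl, by simp [hi, lowerPart], rfl⟩, fun QQ hQQ => ?_⟩⟩
    have h := mem_shqpPairs.1 hQQ
    exact Prod.ext (hempty h.left) (hempty h.right)
  · refine card_eq_zero.2 (eq_empty_of_forall_notMem fun QQ hQQ => hi ?_)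
    have h := mem_shqpPairs.1 hQQ
    rw [← h.card_lowerPart, hempty h.left]
    rfl

theorem filter_notMem_top_shqpPairs :
    (shqpPairs (n + 1) (k + 1) i).filter
      (fun QQ => n ∉ QQ.1.image Prod.fst ∧ n ∉ QQ.1.image Prod.snd) = shqpPairs n k i := by
  ext ⟨Q₁, Q₂⟩
  simp only [mem_filter, mem_shqpPairs]
  constructor
  · rintro ⟨h, hfst, hsnd⟩
    refine (IsSHQPPair.succ_succ_iff (subset_range_of_notMem_image h.left.subset_range hfst hsnd)
      (subset_range_of_notMem_image h.right.subset_range (h.notMem_image_fst_top hfst)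
        (h.image_snd_eq ▸ hsnd))).1 h
  · intro h
    exact ⟨(IsSHQPPair.succ_succ_iff h.left.subset_range h.right.subset_range).2 h,
      h.left.notMem_image_fst, h.left.notMem_image_snd⟩

theorem filter_mem_image_fst_shqpPairs_zero :
    (shqpPairs (n + 1) k 0).filter (fun QQ => n ∈ QQ.1.image Prod.fst) = ∅ := by
  refine filter_eq_empty_iff.2 fun QQ hQQ hn => ?_
  have h := mem_shqpPairs.1 hQQ
  obtain ⟨⟨_, y⟩, hy, rfl⟩ := mem_image.1 hn
  have hlow := h.left.mem_lowerPart_of_mem_top hy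
  rw [card_eq_zero.1 h.card_lowerPart] at hlow
  exact notMem_empty _ hlow

theorem card_filter_mem_image_fst_shqpPairs (hk : k < n) :
    #((shqpPairs (n + 1) (k + 1) (i + 1)).filter (fun QQ => n ∈ QQ.1.image Prod.fst)) =
      (k + 1) * #(shqpPairs n (k + 1) i) := by
  set S := (shqpPairs n (k + 1) i).sigma fun QQ => range n \ QQ.1.image Prod.snd
  have hS : #S = (k + 1) * #(shqpPairs n (k + 1) i) := by
    rw [card_sigma, sum_const_nat fun QQ hQQ =>
      (mem_shqpPairs.1 hQQ).left.card_range_sdiff_image_snd hk, mul_comm]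
  rw [← hS]
  symm
  refine card_nbij (fun a => (insert (n, a.2) a.1.1, insert (n, a.2) a.1.2)) ?_ ?_ ?_
  · rintro ⟨QQ, y⟩ ha
    obtain ⟨hQQ, hy⟩ := mem_sigma.1 ha
    exact mem_filter.2 ⟨mem_shqpPairs.2 ((mem_shqpPairs.1 hQQ).insert_top_lower hk hy),
      mem_image_of_mem Prod.fst (mem_insert_self _ _)⟩
  · rintro ⟨⟨A₁, A₂⟩, y⟩ ha ⟨⟨B₁, B₂⟩, y'⟩ hb heq
    have hA := mem_shqpPairs.1 (mem_sigma.1 ha).1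
    have hB := mem_shqpPairs.1 (mem_sigma.1 hb).1
    obtain ⟨hy, rfl⟩ : (n, y) = (n, y') ∧ A₁ = B₁ := eq_and_eq_of_insert_eq_insert
      hA.left.subset_range hB.left.subset_range (by simp) (by simp) (congrArg Prod.fst heq)
    obtain ⟨-, rfl⟩ : (n, y) = (n, y') ∧ A₂ = B₂ := eq_and_eq_of_insert_eq_insert
      hA.right.subset_range hB.right.subset_range (by simp) (by simp) (congrArg Prod.snd heq)
    obtain ⟨-, rfl⟩ := Prod.mk.inj hy
    rfl
  · rintro ⟨Q₁, Q₂⟩ hQQ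
    obtain ⟨hQQ, hn⟩ := mem_filter.1 hQQ
    have h := mem_shqpPairs.1 hQQ
    obtain ⟨⟨_, y⟩, hy, rfl⟩ := mem_image.1 hn
    refine ⟨⟨(Q₁.erase (_, y), Q₂.erase (_, y)), y⟩, mem_sigma.2 ⟨mem_shqpPairs.2
      (h.erase_top_lower hy), mem_sdiff.2 ⟨mem_range.2 (h.left.lt_of_mem_top_fst hy), ?_⟩⟩, ?_⟩
    · rw [image_erase_of_injOn h.left.injOn_snd hy]
      exact notMem_erase _ _
    · simp [insert_erase hy, insert_erase (h.mem_of_mem_top hy)]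

theorem card_filter_mem_image_snd_shqpPairs (hk : k < n) :
    #((shqpPairs (n + 1) (k + 1) i).filter
      (fun QQ => n ∉ QQ.1.image Prod.fst ∧ n ∈ QQ.1.image Prod.snd)) =
      (k + 1) ^ 2 * #(shqpPairs n (k + 1) i) := by
  set S := (shqpPairs n (k + 1) i).sigma
    fun QQ => (range n \ QQ.1.image Prod.fst) ×ˢ (range n \ QQ.2.image Prod.fst)
  have hS : #S = (k + 1) ^ 2 * #(shqpPairs n (k + 1) i) := by
    rw [card_sigma, sum_const_nat fun QQ hQQ => by
      rw [card_product, (mem_shqpPairs.1 hQQ).left.card_range_sdiff_image_fst hk,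
        (mem_shqpPairs.1 hQQ).right.card_range_sdiff_image_fst hk], mul_comm, sq]
  rw [← hS]
  symm
  refine card_nbij (fun a => (insert (a.2.1, n) a.1.1, insert (a.2.2, n) a.1.2)) ?_ ?_ ?_
  · rintro ⟨QQ, x₁, x₂⟩ ha
    obtain ⟨hQQ, hx⟩ := mem_sigma.1 ha
    obtain ⟨hx₁, hx₂⟩ := mem_product.1 hx
    have h := mem_shqpPairs.1 hQQ
    refine mem_filter.2 ⟨mem_shqpPairs.2 (h.insert_top_upper hk hx₁ hx₂), ?_,
      mem_image_of_mem Prod.snd (mem_insert_self _ _)⟩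
    rw [image_insert, mem_insert, not_or]
    exact ⟨(mem_range.1 (mem_sdiff.1 hx₁).1).ne', h.left.notMem_image_fst⟩
  · rintro ⟨⟨A₁, A₂⟩, x₁, x₂⟩ ha ⟨⟨B₁, B₂⟩, x₁', x₂'⟩ hb heq
    have hA := mem_shqpPairs.1 (mem_sigma.1 ha).1
    have hB := mem_shqpPairs.1 (mem_sigma.1 hb).1
    obtain ⟨hx₁, rfl⟩ : (x₁, n) = (x₁', n) ∧ A₁ = B₁ := eq_and_eq_of_insert_eq_insert
      hA.left.subset_range hB.left.subset_range (by simp) (by simp) (congrArg Prod.fst heq)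
    obtain ⟨hx₂, rfl⟩ : (x₂, n) = (x₂', n) ∧ A₂ = B₂ := eq_and_eq_of_insert_eq_insert
      hA.right.subset_range hB.right.subset_range (by simp) (by simp) (congrArg Prod.snd heq)
    obtain ⟨rfl, -⟩ := Prod.mk.inj hx₁
    obtain ⟨rfl, -⟩ := Prod.mk.inj hx₂
    rfl
  · rintro ⟨Q₁, Q₂⟩ hQQ
    obtain ⟨hQQ, hfst, hsnd⟩ := mem_filter.1 hQQ
    have h := mem_shqpPairs.1 hQQ
    obtain ⟨⟨x₁, _⟩, hx₁, rfl⟩ := mem_image.1 hsnd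
    obtain ⟨⟨x₂, _⟩, hx₂, hx₂n⟩ := mem_image.1 (h.image_snd_eq ▸ hsnd)
    simp only at hx₂n
    subst hx₂n
    refine ⟨⟨(Q₁.erase (x₁, _), Q₂.erase (x₂, _)), x₁, x₂⟩, mem_sigma.2 ⟨mem_shqpPairs.2
      (h.erase_top_upper hfst hx₁ hx₂), mem_product.2 ⟨mem_sdiff.2
        ⟨mem_range.2 (h.left.lt_of_mem_top_snd hx₁), ?_⟩,
        mem_sdiff.2 ⟨mem_range.2 (h.right.lt_of_mem_top_snd hx₂), ?_⟩⟩⟩, ?_⟩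
    · rw [image_erase_of_injOn h.left.injOn_fst hx₁]
      exact notMem_erase _ _
    · rw [image_erase_of_injOn h.right.injOn_fst hx₂]
      exact notMem_erase _ _
    · simp [insert_erase hx₁, insert_erase hx₂]

theorem card_shqpPairs_succ_succ (hk : k < n) :
    #(shqpPairs (n + 1) (k + 1) i) =
      #(shqpPairs n k i) + (k + 1) ^ 2 * #(shqpPairs n (k + 1) i) +
        #((shqpPairs (n + 1) (k + 1) i).filter (fun QQ => n ∈ QQ.1.image Prod.fst)) := by
  set S := shqpPairs (n + 1) (k + 1) i
  have hfst := card_filter_add_card_filter_not (s := S) (fun QQ => n ∈ QQ.1.image Prod.fst)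
  have hsnd := card_filter_add_card_filter_not (s := S.filter fun QQ => n ∉ QQ.1.image Prod.fst)
    (fun QQ => n ∈ QQ.1.image Prod.snd)
  rw [filter_filter, filter_filter, card_filter_mem_image_snd_shqpPairs hk,
    filter_notMem_top_shqpPairs] at hsnd
  omega

/-- The points `(n, y)` and `(x, n)` of a full permutation of `{0, …, n}` are sub- and
supdiagonal respectively, against the hook condition. -/
theorem not_isSHQPNat_succ_zero (Q : Finset (ℕ × ℕ)) : ¬ IsSHQPNat (n + 1) 0 Q := by
  intro h
  have htop : ∀ s : Finset ℕ, #(range (n + 1) \ s) = 0 → n ∈ s := fun s hs => by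
    by_contra hn
    exact notMem_empty n (card_eq_zero.1 hs ▸ mem_sdiff.2 ⟨self_mem_range_succ n, hn⟩)
  obtain ⟨⟨_, y⟩, hy, rfl⟩ := mem_image.1 (htop _ (h.card_range_sdiff_image_fst (Nat.zero_le _)))
  exact h.notMem_image_snd_of_mem_top hy (htop _ (h.card_range_sdiff_image_snd (Nat.zero_le _)))

theorem shqpPairs_succ_zero : shqpPairs (n + 1) 0 i = ∅ :=
  eq_empty_of_forall_notMem fun QQ hQQ =>
    not_isSHQPNat_succ_zero QQ.1 (mem_shqpPairs.1 hQQ).left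

end shqpPairs

theorem JS_succ_succ (n k : ℕ) :
    JS (n + 1) (k + 1) = JS n k + C ((k : ℤ) + 1) * (C ((k : ℤ) + 1) + X) * JS n (k + 1) :=
  rfl

theorem JS_eq_zero_of_lt {n k : ℕ} (h : n < k) : JS n k = 0 := by
  induction n generalizing k with
  | zero => obtain ⟨k, rfl⟩ := Nat.exists_eq_add_of_lt h; rfl
  | succ n ih =>
    obtain ⟨k, rfl⟩ := Nat.exists_eq_add_of_lt (Nat.zero_lt_of_lt h)
    rw [JS_succ_succ, ih (by omega), ih (by omega), mul_zero, add_zero]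

theorem JS_self (n : ℕ) : JS n n = 1 := by
  induction n with
  | zero => rfl
  | succ n ih => rw [JS_succ_succ, ih, JS_eq_zero_of_lt n.lt_succ_self, mul_zero, add_zero]

theorem coeff_JS_succ_succ (n k i : ℕ) :
    (JS (n + 1) (k + 1)).coeff i = (JS n k).coeff i + ((k : ℤ) + 1) ^ 2 * (JS n (k + 1)).coeff i +
      ((k : ℤ) + 1) * (X * JS n (k + 1)).coeff i := by
  rw [JS_succ_succ, mul_assoc, add_mul, mul_add, coeff_add, coeff_add, ← mul_assoc, ← C_mul,
    coeff_C_mul, coeff_C_mul, sq, add_assoc]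

theorem coeff_JS_self (n i : ℕ) : (JS n n).coeff i = #(shqpPairs n n i) := by
  rw [JS_self, coeff_one, card_shqpPairs_self]
  split_ifs <;> simp

theorem coeff_JS_eq_card_shqpPairs {n k : ℕ} (hk : k ≤ n) (i : ℕ) :
    (JS n k).coeff i = #(shqpPairs n k i) := by
  induction n generalizing k i with
  | zero => obtain rfl := Nat.le_zero.1 hk; exact coeff_JS_self 0 i
  | succ n ih =>
    cases k with
    | zero => rw [shqpPairs_succ_zero]; rfl
    | succ k =>
      rcases hk.lt_or_eq with hk | hk
      · rw [coeff_JS_succ_succ, card_shqpPairs_succ_succ (by omega), ih (by omega),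
          ih (by omega)]
        cases i with
        | zero => simp [filter_mem_image_fst_shqpPairs_zero]
        | succ i =>
          rw [coeff_X_mul, ih (by omega), card_filter_mem_image_fst_shqpPairs (by omega)]
          push_cast
          ring
      · rw [← hk]
        exact coeff_JS_self _ i

def valPairEmb (n : ℕ) : Fin n × Fin n ↪ ℕ × ℕ := Fin.valEmbedding.prodMap Fin.valEmbedding

section Transfer

variable {n k : ℕ}

theorem lowerPart_map_valPairEmb (Q : Finset (Fin n × Fin n)) :
    lowerPart (Q.map (valPairEmb n)) = (Qsub Q).map (valPairEmb n) := by
  simp [lowerPart, Qsub, filter_map, valPairEmb]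

theorem image_snd_map_valPairEmb (Q : Finset (Fin n × Fin n)) :
    (Q.map (valPairEmb n)).image Prod.snd = (prY Q).map Fin.valEmbedding := by
  simp [prY, map_eq_image, image_image, Function.comp_def, valPairEmb]

theorem isSHQP_iff_isSHQPNat (Q : Finset (Fin n × Fin n)) :
    IsSHQP n k Q ↔ IsSHQPNat n k (Q.map (valPairEmb n)) := by
  have hfst : Set.InjOn Prod.fst (Q.map (valPairEmb n) : Set (ℕ × ℕ)) ↔
      Set.InjOn Prod.fst (Q : Set (Fin n × Fin n)) := by
    simp only [Set.InjOn, coe_map, Set.forall_mem_image, mem_coe, (valPairEmb n).injective.eq_iff]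
    simp [valPairEmb, Fin.val_inj]
  have hsnd : Set.InjOn Prod.snd (Q.map (valPairEmb n) : Set (ℕ × ℕ)) ↔
      Set.InjOn Prod.snd (Q : Set (Fin n × Fin n)) := by
    simp only [Set.InjOn, coe_map, Set.forall_mem_image, mem_coe, (valPairEmb n).injective.eq_iff]
    simp [valPairEmb, Fin.val_inj]
  have hhook : IsHooked (Q.map (valPairEmb n)) ↔ IsHooked Q := by
    simp only [IsHooked, forall_mem_map]
    simp [valPairEmb, Fin.val_inj]
  have hsub : Q.map (valPairEmb n) ⊆ range n ×ˢ range n := fun p hp => by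
    obtain ⟨q, -, rfl⟩ := mem_map.1 hp
    simp [valPairEmb]
  rw [IsSHQP, exists_perm_iff_injOn, isHooked_iff, ← hfst, ← hsnd, ← hhook,
    ← card_map (valPairEmb n)]
  exact ⟨fun ⟨⟨h₁, h₂⟩, hc, hh⟩ => ⟨hsub, h₁, h₂, hc, hh⟩,
    fun h => ⟨⟨h.injOn_fst, h.injOn_snd⟩, h.card_eq, h.isHooked⟩⟩

theorem exists_map_valPairEmb_eq {Q : Finset (ℕ × ℕ)} (hQ : Q ⊆ range n ×ˢ range n) :
    ∃ Q' : Finset (Fin n × Fin n), Q'.map (valPairEmb n) = Q := by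
  have hrange : range n ×ˢ range n ⊆ univ.map (valPairEmb n) := fun p hp => by
    simp only [mem_product, mem_range] at hp
    exact mem_map.2 ⟨(⟨p.1, hp.1⟩, ⟨p.2, hp.2⟩), mem_univ _, rfl⟩
  obtain ⟨Q', -, hQ'⟩ := subset_map_iff.1 (hQ.trans hrange)
  exact ⟨Q', hQ'.symm⟩

theorem isSHQPPair_map_valPairEmb_iff {i : ℕ} (Q₁ Q₂ : Finset (Fin n × Fin n)) :
    IsSHQPPair n k i (Q₁.map (valPairEmb n)) (Q₂.map (valPairEmb n)) ↔
      IsSHQP n k Q₁ ∧ IsSHQP n k Q₂ ∧ Qsub Q₁ = Qsub Q₂ ∧ #(Qsub Q₁) = i ∧ #(Qsub Q₂) = i ∧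
        prY Q₁ = prY Q₂ := by
  simp only [isSHQP_iff_isSHQPNat]
  rw [← map_inj (f := valPairEmb n), ← lowerPart_map_valPairEmb, ← lowerPart_map_valPairEmb,
    ← card_map (valPairEmb n), ← card_map (valPairEmb n), ← lowerPart_map_valPairEmb,
    ← lowerPart_map_valPairEmb, ← map_inj (f := Fin.valEmbedding), ← image_snd_map_valPairEmb,
    ← image_snd_map_valPairEmb]
  constructor
  · rintro ⟨hl, hr, hlow, hcard, hsnd⟩
    exact ⟨hl, hr, hlow, hcard, hlow ▸ hcard, hsnd⟩
  · rintro ⟨hl, hr, hlow, hcard, -, hsnd⟩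
    exact ⟨hl, hr, hlow, hcard, hsnd⟩

theorem natCard_eq_card_shqpPairs (i : ℕ) :
    Nat.card {QQ : Finset (Fin n × Fin n) × Finset (Fin n × Fin n) //
      IsSHQP n k QQ.1 ∧ IsSHQP n k QQ.2 ∧ Qsub QQ.1 = Qsub QQ.2 ∧
        (Qsub QQ.1).card = i ∧ (Qsub QQ.2).card = i ∧ prY QQ.1 = prY QQ.2} =
      #(shqpPairs n k i) := by
  classical
  rw [Nat.card_eq_fintype_card, Fintype.card_subtype]
  refine card_nbij (fun QQ => (QQ.1.map (valPairEmb n), QQ.2.map (valPairEmb n))) ?_ ?_ ?_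
  · intro QQ hQQ
    exact mem_shqpPairs.2 ((isSHQPPair_map_valPairEmb_iff _ _).2 (mem_filter.1 hQQ).2)
  · intro QQ _ QQ' _ h
    exact Prod.ext (map_injective _ (congrArg Prod.fst h)) (map_injective _ (congrArg Prod.snd h))
  · rintro ⟨Q₁, Q₂⟩ hQQ
    have h := mem_shqpPairs.1 hQQ
    obtain ⟨Q₁, rfl⟩ := exists_map_valPairEmb_eq h.left.subset_range
    obtain ⟨Q₂, rfl⟩ := exists_map_valPairEmb_eq h.right.subset_range
    exact ⟨(Q₁, Q₂), mem_filter.2 ⟨mem_univ _, (isSHQPPair_map_valPairEmb_iff _ _).1 h⟩, rfl⟩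

end Transfer

theorem stmt10 (n k : ℕ) (i : ℕ) (hi1 : 1 ≤ i) (hi2 : i ≤ n - k) :
    (JS n k).coeff i =
      (Nat.card {QQ : Finset (Fin n × Fin n) × Finset (Fin n × Fin n) //
        IsSHQP n k QQ.1 ∧ IsSHQP n k QQ.2 ∧ Qsub QQ.1 = Qsub QQ.2 ∧
        (Qsub QQ.1).card = i ∧ (Qsub QQ.2).card = i ∧ prY QQ.1 = prY QQ.2} : ℤ) := by
  rw [natCard_eq_card_shqpPairs, coeff_JS_eq_card_shqpPairs (by omega)]
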